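/- arXiv:2007.10630 — 3 statements merged into one kernel-verified Lean document; each statement's English description precedes it below -/
import Mathlib

section
/- Let K₁, K₂ be integers and let X = (ln2 + (2K₁+1)πi)·x∂ₓ − (ln2 + 2K₂πi)·y∂_y. Then X has no nonconstant monomial first integral x^p y^q: X(x^p y^q) = 0 with (p,q) ∈ ℕ² implies p = q = 0. -/
open Complex

/-- The vector field `X = (ln 2 + (2K₁+1)πi) x ∂ₓ − (ln 2 + 2K₂πi) y ∂_y` admits no
nonconstant monomial first integral `x^p y^q`: the first-integral equation
`p·λ + q·μ = 0` forces `p = q = 0`. -/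
theorem stmt_1 (K₁ K₂ : ℤ) (p q : ℕ)
    (h : (p : ℂ) * ((Real.log 2 : ℂ) + (2 * (K₁ : ℂ) + 1) * Real.pi * Complex.I)
        + (q : ℂ) * (-((Real.log 2 : ℂ) + 2 * (K₂ : ℂ) * Real.pi * Complex.I)) = 0) :
    p = 0 ∧ q = 0 := by
  have hre := congrArg Complex.re h
  have him := congrArg Complex.im h
  simp only [Complex.add_re, Complex.add_im, Complex.mul_re, Complex.mul_im,
    Complex.neg_re, Complex.neg_im, Complex.ofReal_re, Complex.ofReal_im,
    Complex.natCast_re, Complex.natCast_im, Complex.intCast_re, Complex.intCast_im,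
    Complex.I_re, Complex.I_im, Complex.one_re, Complex.one_im, Complex.zero_re,
    Complex.zero_im, Complex.re_ofNat, Complex.im_ofNat,
    mul_zero, zero_mul, mul_one, sub_zero, zero_sub, add_zero, zero_add, neg_zero,
    neg_neg] at hre him
  -- hre : (p - q) * Real.log 2 = 0 style; him : imaginary part
  have hlog : Real.log 2 ≠ 0 := Real.log_ne_zero_of_pos_of_ne_one (by norm_num) (by norm_num)
  have hpi : Real.pi ≠ 0 := Real.pi_ne_zero
  have hpq : (p : ℝ) = q := by
    by_contra hne
    apply hlog
    have h1 : ((p : ℝ) - q) * Real.log 2 = 0 := by linarith [hre]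
    rcases mul_eq_zero.mp h1 with h0 | h0
    · exact absurd (by exact_mod_cast sub_eq_zero.mp h0) hne
    · exact h0
  have hpq' : p = q := by exact_mod_cast hpq
  subst hpq'
  -- now him gives p * ((2K₁+1) - 2K₂) * π = 0
  have him' : (p : ℝ) * ((2 * K₁ + 1) - 2 * K₂) = 0 := by
    have h2 : ((p : ℝ) * ((2 * K₁ + 1) - 2 * K₂)) * Real.pi = 0 := by ring_nf; ring_nf at him; linarith [him]
    exact (mul_eq_zero.mp h2).resolve_right hpi
  have hodd : ((2 * K₁ + 1 : ℝ) - 2 * K₂) ≠ 0 := by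
    intro hc
    have hc' : (2 * K₁ + 1 : ℝ) = 2 * K₂ := by linarith
    have : (2 * K₁ + 1 : ℤ) = 2 * K₂ := by exact_mod_cast hc'
    omega
  have : (p : ℝ) = 0 := by
    rcases mul_eq_zero.mp him' with h0 | h0
    · exact h0
    · exact absurd h0 hodd
  have : p = 0 := by exact_mod_cast this
  exact ⟨this, this⟩
end

section
/- Let μᵢₘ be nonzero complex numbers (1 ≤ i ≤ p, 1 ≤ m ≤ n) with the p vectors (ln|μᵢ₁|,…,ln|μᵢₙ|) ∈ ℝⁿ linearly independent. Fix m and suppose every ℓ ∈ Ω = {ℓ ∈ ℕⁿ : ∏ₖ μᵢₖ^{ℓₖ} = 1 ∀i} has ℓₘ = 0 and the ℝ-span of Ω has dimension n − p. Then there is no γ ∈ ℕⁿ with γₘ = 0 and μᵢₘ = ∏ₖ μᵢₖ^{γₖ} for all i = 1,…,p. -/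
/-!
Taking `log ‖·‖` turns the multiplicative relations `∏ₖ μᵢₖ ^ ℓₖ = 1` into the linear system
`∑ₖ ℓₖ log ‖μᵢₖ‖ = 0`, whose solution space has dimension `n - p` because the rows are
independent. Hence it is the span of `Ω`, on which the `m`-th coordinate vanishes. A resonance
`μᵢₘ = ∏ₖ μᵢₖ ^ γₖ` with `γₘ = 0` gives the solution `γ - eₘ`, whose `m`-th coordinate is `-1`.
-/

open Module Matrix

theorem Matrix.finrank_ker_mulVecLin_of_linearIndependent_row {m n K : Type*} [Fintype m]
    [Fintype n] [Field K] {A : Matrix m n K} (hA : LinearIndependent K A.row) :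
    finrank K (LinearMap.ker A.mulVecLin) = Fintype.card n - Fintype.card m := by
  have hrank : finrank K (LinearMap.range A.mulVecLin) = Fintype.card m := hA.rank_matrix
  have := A.mulVecLin.finrank_range_add_finrank_ker
  rw [hrank, finrank_fintype_fun_eq_card] at this
  omega

theorem log_norm_prod_pow {𝕜 ι : Type*} [NormedField 𝕜] [Fintype ι] {z : ι → 𝕜}
    (hz : ∀ k, z k ≠ 0) (ℓ : ι → ℕ) :
    Real.log ‖∏ k, z k ^ ℓ k‖ = ∑ k, (ℓ k : ℝ) * Real.log ‖z k‖ := by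
  rw [norm_prod, Real.log_prod fun k _ => norm_ne_zero_iff.mpr (pow_ne_zero _ (hz k))]
  simp only [norm_pow, Real.log_pow]

noncomputable def logNormMatrix {ι κ 𝕜 : Type*} [Norm 𝕜] (μ : ι → κ → 𝕜) : Matrix ι κ ℝ :=
  fun i k => Real.log ‖μ i k‖

theorem logNormMatrix_mulVec_natCast {ι κ 𝕜 : Type*} [Fintype κ] [NormedField 𝕜]
    {μ : ι → κ → 𝕜} (hμ : ∀ i k, μ i k ≠ 0) (ℓ : κ → ℕ) :
    logNormMatrix μ *ᵥ (fun k => (ℓ k : ℝ)) = fun i => Real.log ‖∏ k, μ i k ^ ℓ k‖ := by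
  ext i
  simp only [Matrix.mulVec, dotProduct, logNormMatrix, log_norm_prod_pow (hμ i), mul_comm]

/-- Division lemma, projectively hyperbolic case: if every `ℓ ∈ Ω` has `ℓₘ = 0`
and the real span of `Ω` has dimension `n − p`, and the log-modulus vectors are
independent, then there is no resonant multi-index `γ ∈ ℕⁿ` with `γₘ = 0` and
`μᵢₘ = ∏ₖ μᵢₖ^{γₖ}` for all `i`. -/
theorem stmt_7 (n p : ℕ) (μ : Fin p → Fin n → ℂ) (hμ : ∀ i k, μ i k ≠ 0)
    (hindep : LinearIndependent ℝ
      (fun i : Fin p => fun k : Fin n => Real.log ‖μ i k‖))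
    (m : Fin n)
    (hΩm : ∀ ℓ : Fin n → ℕ, (∀ i, ∏ k, μ i k ^ ℓ k = 1) → ℓ m = 0)
    (hdim : Module.finrank ℝ (Submodule.span ℝ
      {v : Fin n → ℝ | ∃ ℓ : Fin n → ℕ, (∀ k, v k = (ℓ k : ℝ)) ∧
        ∀ i, ∏ k, μ i k ^ ℓ k = 1}) = n - p) :
    ¬ ∃ γ : Fin n → ℕ, γ m = 0 ∧ ∀ i, μ i m = ∏ k, μ i k ^ γ k := by
  rintro ⟨γ, hγm, hγ⟩
  set A := logNormMatrix μ
  set S := Submodule.span ℝ {v : Fin n → ℝ | ∃ ℓ : Fin n → ℕ, (∀ k, v k = (ℓ k : ℝ)) ∧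
    ∀ i, ∏ k, μ i k ^ ℓ k = 1}
  have hS_ker : S ≤ LinearMap.ker A.mulVecLin := by
    refine Submodule.span_le.mpr ?_
    rintro v ⟨ℓ, hvℓ, hℓ⟩
    obtain rfl : v = fun k => (ℓ k : ℝ) := funext hvℓ
    simp [A, logNormMatrix_mulVec_natCast hμ, hℓ, Pi.zero_def]
  have hS_eq : S = LinearMap.ker A.mulVecLin := Submodule.eq_of_le_of_finrank_eq hS_ker <| by
    rw [hdim, finrank_ker_mulVecLin_of_linearIndependent_row (A := A) hindep,
      Fintype.card_fin, Fintype.card_fin]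
  have hS_proj : S ≤ LinearMap.ker (LinearMap.proj m) := by
    refine Submodule.span_le.mpr ?_
    rintro v ⟨ℓ, hvℓ, hℓ⟩
    simp [hvℓ m, hΩm ℓ hℓ]
  set w : Fin n → ℝ := (fun k => (γ k : ℝ)) - Pi.single m 1
  have hw : w ∈ LinearMap.ker A.mulVecLin := by
    ext i
    simp [w, A, Matrix.mulVec_sub, logNormMatrix_mulVec_natCast hμ, ← hγ, logNormMatrix]
  have hwm := hS_proj (hS_eq ▸ hw)
  simp [w, hγm] at hwm
end

section
/- Let μ₁,…,μₙ be nonzero complex numbers such that for some ℓ ∈ Ω = {ℓ ∈ ℕⁿ : ∏ μₖ^{ℓₖ} = 1} one has ℓₘ ≥ 1. Let φ₁,…,φₙ be formal power series in n variables with φₖ = μₖxₖ + (higher order terms), and suppose ∏ₖ φₖ^{ℓₖ} = ∏ₖ xₖ^{ℓₖ}. Then xₘ divides φₘ in the formal power series ring. -/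
/-!
`X m` is prime in the power series ring: divisibility by `X m` means positive order in the
variable `X m`, and this order is additive on products. Hence `X m`, dividing
`∏ φₖ ^ ℓₖ = ∏ Xₖ ^ ℓₖ`, divides some `φₖ`; this forces `k = m`, since for `k ≠ m` the linear
term `μₖ Xₖ` of `φₖ` is a nonzero term free of `X m`.
-/

open Finset MvPowerSeries

namespace MvPowerSeries

variable {σ R : Type*} [CommSemiring R]

theorem X_dvd_iff_weightedOrder_ne_zero [DecidableEq σ] {s : σ} {f : MvPowerSeries σ R} :
    X s ∣ f ↔ f.weightedOrder (Pi.single s 1) ≠ 0 := by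
  rw [X_dvd_iff, ← Order.one_le_iff_ne_zero]
  constructor
  · intro h
    refine nat_le_weightedOrder _ fun d hd ↦ h d ?_
    rwa [Nat.lt_one_iff, Finsupp.weight_single_one_apply] at hd
  · intro h d hd
    apply coeff_eq_zero_of_lt_weightedOrder (Pi.single s 1)
    rw [Finsupp.weight_single_one_apply, hd]
    exact_mod_cast Order.one_le_iff_pos.mp h

theorem prime_X [NoZeroDivisors R] [Nontrivial R] (s : σ) : Prime (X s : MvPowerSeries σ R) := by
  classical
  refine ⟨nonZeroDivisors.ne_zero X_mem_nonzeroDivisors, fun h ↦ ?_, fun f g h ↦ ?_⟩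
  · simpa using X_dvd_iff.mp (h.dvd : X s ∣ (1 : MvPowerSeries σ R)) 0 rfl
  · simp only [X_dvd_iff_weightedOrder_ne_zero, weightedOrder_mul] at h ⊢
    by_contra! hfg
    simp [hfg] at h

end MvPowerSeries

theorem stmt_8_general (n : ℕ) (μ : Fin n → ℂ) (hμ : ∀ k, μ k ≠ 0)
    (ℓ : Fin n → ℕ)
    (m : Fin n) (hm : 1 ≤ ℓ m)
    (φ : Fin n → MvPowerSeries (Fin n) ℂ)
    (hlin : ∀ k j, MvPowerSeries.coeff (Finsupp.single j 1) (φ k)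
      = if j = k then μ k else 0)
    (hpres : ∏ k, φ k ^ ℓ k = ∏ k, (MvPowerSeries.X k : MvPowerSeries (Fin n) ℂ) ^ ℓ k) :
    (MvPowerSeries.X m : MvPowerSeries (Fin n) ℂ) ∣ φ m := by
  have hdvd : X m ∣ ∏ k, φ k ^ ℓ k :=
    hpres ▸ (dvd_pow_self _ (by omega)).trans (dvd_prod_of_mem _ (mem_univ m))
  obtain ⟨k, -, hk⟩ := (prime_X m).exists_mem_finset_dvd hdvd
  obtain rfl : k = m := by
    by_contra hkm
    have h := X_dvd_iff.mp ((prime_X m).dvd_of_dvd_pow hk) (Finsupp.single k 1)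
      (Finsupp.single_eq_of_ne (Ne.symm hkm))
    simp [hlin, hμ] at h
  exact (prime_X k).dvd_of_dvd_pow hk

/-- Division lemma, Case 1: if `ℓ ∈ Ω` has `ℓₘ ≥ 1` and the formal
diffeomorphism `Φ = (φ₁,…,φₙ)`, with `φₖ = μₖxₖ + h.o.t.`, preserves the
monomial `x^ℓ` exactly, i.e. `∏ₖ φₖ^{ℓₖ} = ∏ₖ xₖ^{ℓₖ}`, then `xₘ ∣ φₘ`. -/
theorem stmt_8 (n : ℕ) (μ : Fin n → ℂ) (hμ : ∀ k, μ k ≠ 0)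
    (ℓ : Fin n → ℕ) (hΩ : ∏ k, μ k ^ ℓ k = 1)
    (m : Fin n) (hm : 1 ≤ ℓ m)
    (φ : Fin n → MvPowerSeries (Fin n) ℂ)
    (hconst : ∀ k, MvPowerSeries.constantCoeff (φ k) = 0)
    (hlin : ∀ k j, MvPowerSeries.coeff (Finsupp.single j 1) (φ k)
      = if j = k then μ k else 0)
    (hpres : ∏ k, φ k ^ ℓ k = ∏ k, (MvPowerSeries.X k : MvPowerSeries (Fin n) ℂ) ^ ℓ k) :
    (MvPowerSeries.X m : MvPowerSeries (Fin n) ℂ) ∣ φ m :=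
  stmt_8_general n μ hμ ℓ m hm φ hlin hpres
end
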